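/- Let I be a set of jobs, all of common density Δ > 0, scheduled to run consecutively on a machine of speed s starting at time τ ≥ 0. Then the sum over jobs j in I of Γ_j = w_j·(C_j − p_j/(2s)) equals Δ · (τ + (Σ_{j∈I} p_j)/(2s)) · (Σ_{j∈I} p_j), independently of the ordering of the jobs within the block. -/

import Mathlib

/-!
With equal densities, `Σ_j w_j C_j` is `Δ τ Σ p` plus `Δ / s` times the sum of `p_j p_k` over
pairs with `k` scheduled no later than `j`. Adding that sum to its mirror image (`j` no later
than `k`) counts every off-diagonal pair once and every diagonal pair twice, so twice the ordered
sum is `(Σ p)² + Σ p²` whatever the order; the correction `p_j / (2s)` removes the `Σ p²` term.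
-/

open Finset

section OrderedProducts

variable {ι α R : Type*} [LinearOrder α] [CommSemiring R]

lemma ite_le_add_ite_ge_of_injective [DecidableEq ι] {g : ι → α} (hg : Function.Injective g)
    (j k : ι) (x : R) :
    ((if g k ≤ g j then x else 0) + if g j ≤ g k then x else 0) = x + if k = j then x else 0 := by
  rcases lt_trichotomy (g k) (g j) with hlt | heq | hgt
  · simp [hlt.le, not_le.mpr hlt, ne_of_apply_ne g hlt.ne]
  · simp [hg heq]
  · simp [hgt.le, not_le.mpr hgt, ne_of_apply_ne g hgt.ne']

theorem two_mul_sum_mul_sum_filter_le [Fintype ι] {g : ι → α} (hg : Function.Injective g)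
    (f : ι → R) :
    2 * ∑ j, f j * ∑ k ∈ univ.filter (fun k => g k ≤ g j), f k =
      (∑ j, f j) ^ 2 + ∑ j, f j ^ 2 := by
  classical
  have h_swap : ∑ j, ∑ k, (if g k ≤ g j then f j * f k else 0) =
      ∑ j, ∑ k, (if g j ≤ g k then f j * f k else 0) := by
    rw [sum_comm]
    exact sum_congr rfl fun j _ => sum_congr rfl fun k _ => by rw [mul_comm]
  calc 2 * ∑ j, f j * ∑ k ∈ univ.filter (fun k => g k ≤ g j), f k
      = ∑ j, ∑ k, ((if g k ≤ g j then f j * f k else 0) +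
          if g j ≤ g k then f j * f k else 0) := by
        rw [sum_congr rfl fun j _ => sum_add_distrib, sum_add_distrib, ← h_swap, ← two_mul]
        simp only [sum_filter, mul_sum, mul_ite, mul_zero]
    _ = ∑ j, ∑ k, (f j * f k + if k = j then f j * f k else 0) := by
        simp only [ite_le_add_ite_ge_of_injective hg]
    _ = (∑ j, f j) ^ 2 + ∑ j, f j ^ 2 := by
        simp [sum_add_distrib, sq, sum_mul_sum]

end OrderedProducts

theorem sum_gamma_equal_density_general (n : ℕ) (p : Fin n → ℝ) (Δ s τ : ℝ)
    (π : Equiv.Perm (Fin n)) :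
    ∑ j, (Δ * p j) *
        ((τ + (∑ k ∈ univ.filter (fun k => π k ≤ π j), p k) / s) - p j / (2 * s)) =
      Δ * (τ + (∑ j, p j) / (2 * s)) * (∑ j, p j) := by
  have h_ordered := two_mul_sum_mul_sum_filter_le π.injective p
  calc ∑ j, (Δ * p j) *
          ((τ + (∑ k ∈ univ.filter (fun k => π k ≤ π j), p k) / s) - p j / (2 * s))
      = ∑ j, (Δ * τ * p j + Δ / (2 * s) *
          (2 * (p j * ∑ k ∈ univ.filter (fun k => π k ≤ π j), p k) - p j ^ 2)) := by
        congr! 1 with j; ring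
    _ = Δ * τ * ∑ j, p j + Δ / (2 * s) *
          (2 * ∑ j, p j * ∑ k ∈ univ.filter (fun k => π k ≤ π j), p k - ∑ j, p j ^ 2) := by
        simp only [sum_add_distrib, sum_sub_distrib, ← mul_sum]
    _ = Δ * (τ + (∑ j, p j) / (2 * s)) * (∑ j, p j) := by
        rw [h_ordered]; ring

/-- a block of jobs of common density `Δ` running consecutively (in an
arbitrary order `π`) on a machine of speed `s` starting at time `τ ≥ 0` has total
`Γ`-value `Δ (τ + Σp/(2s)) Σp`, independently of the ordering. -/
theorem sum_gamma_equal_density (n : ℕ) (p : Fin n → ℝ) (Δ s τ : ℝ)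
    (π : Equiv.Perm (Fin n))
    (hs : 0 < s) (hΔ : 0 < Δ) (hτ : 0 ≤ τ) (hp : ∀ j, 0 < p j) :
    ∑ j, (Δ * p j) *
        ((τ + (∑ k ∈ univ.filter (fun k => π k ≤ π j), p k) / s) - p j / (2 * s)) =
      Δ * (τ + (∑ j, p j) / (2 * s)) * (∑ j, p j) :=
  sum_gamma_equal_density_general n p Δ s τ π
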